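/- arXiv:2407.04029 — 2 statements merged into one kernel-verified Lean document; each statement's English description precedes it below -/
import Mathlib

section
/- Let n, d, c be positive integers with c ≥ 3, let X̃ ∈ ℝ^{n×d} be a fixed matrix, and let 𝒳_*, 𝒵_*, ℰ_{l,21}, ℰ_{f,1} ≥ 0 be constants. Let Θ be the set of triples (X, Z, E_l) with X ∈ ℝ^{n×d}, Z ∈ ℝ^{d×c}, E_l ∈ ℝ^{n×c} satisfying ‖X‖_* ≤ 𝒳_*, ‖Z‖_* ≤ 𝒵_*, ‖E_l‖_{2,1} ≤ ℰ_{l,21}, ‖X̃ − X‖₁ ≤ ℰ_{f,1}, and such that every row of XZ is a standard basis (one-hot) vector of ℝ^c with all entries in {0,1}. Then the empirical Rademacher complexity of the associated function class, namely (1/2^{nc}) Σ_{σ : [n]×[c] → {−1,+1}} sup_{(X,Z,E_l) ∈ Θ} (1/(nc)) Σ_{i=1}^n Σ_{j=1}^c σ(i,j)·((XZ)_{ij} + (E_l)_{ij}), is at most ℰ_{l,21}·√(3 ln c /(nc)) + min{ 𝒳_*·𝒵_*·√(ln(2·max(n,c))/(nc)), 𝒵_*·(‖X̃‖_F + √d·ℰ_{f,1})/√(nc),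 √(2/c) }. -/
open Matrix

/-- Entrywise ℓ1-norm of a real matrix. -/
noncomputable def l1Norm {m k : ℕ} (A : Matrix (Fin m) (Fin k) ℝ) : ℝ :=
  ∑ i, ∑ j, |A i j|

/-- Frobenius norm of a real matrix. -/
noncomputable def frobNorm {m k : ℕ} (A : Matrix (Fin m) (Fin k) ℝ) : ℝ :=
  Real.sqrt (∑ i, ∑ j, (A i j) ^ 2)

/-- ℓ2,1-norm of a real matrix: the sum of the Euclidean norms of the rows. -/
noncomputable def l21Norm {m k : ℕ} (A : Matrix (Fin m) (Fin k) ℝ) : ℝ :=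
  ∑ i, Real.sqrt (∑ j, (A i j) ^ 2)

/-- Nuclear norm of a real matrix: tr((AᵀA)^{1/2}), i.e. the sum of the singular values. -/
noncomputable def nuclearNorm {m k : ℕ} (A : Matrix (Fin m) (Fin k) ℝ) : ℝ :=
  (((Matrix.posSemidef_conjTranspose_mul_self A).1.eigenvectorUnitary : Matrix (Fin k) (Fin k) ℝ) *
    diagonal (((↑) ∘ (fun i => √((Matrix.posSemidef_conjTranspose_mul_self A).1.eigenvalues i))) : Fin k → ℝ) *
    (star (Matrix.posSemidef_conjTranspose_mul_self A).1.eigenvectorUnitary : Matrix (Fin k) (Fin k) ℝ)).trace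

/-- The real sign ±1 associated with a Boolean Rademacher variable. -/
noncomputable def sgn (b : Bool) : ℝ := if b then 1 else -1

/-!
The bound holds for every sign pattern σ, not only on average. A one-hot row of `XZ` contributes
at most `1` to the correlation, and Cauchy–Schwarz bounds the contribution of row `i` of `E_l`
by `√c ‖(E_l)_i‖₂`, so every value under the supremum is at most `1/c + ℰ_{l,21} √c / (nc)`.
Feasibility also forces `√n = ‖XZ‖_F ≤ ‖X‖_F ‖Z‖_F`, and the Frobenius norm is dominated by the
nuclear norm and by the entrywise ℓ1-norm; hence `√n ≤ 𝒳_* 𝒵_*` and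
`√n ≤ 𝒵_* (‖X̃‖_F + √d ℰ_{f,1})`, which puts `1/c` below each term of the minimum.
-/

open Finset

theorem Real.sqrt_sum_le_sum_sqrt {ι : Type*} (s : Finset ι) {f : ι → ℝ}
    (hf : ∀ i ∈ s, 0 ≤ f i) : √(∑ i ∈ s, f i) ≤ ∑ i ∈ s, √(f i) := by
  refine Real.sqrt_le_iff.mpr ⟨sum_nonneg fun i _ => Real.sqrt_nonneg _, ?_⟩
  calc ∑ i ∈ s, f i = ∑ i ∈ s, √(f i) ^ 2 :=
        sum_congr rfl fun i hi => (Real.sq_sqrt (hf i hi)).symm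
    _ ≤ _ := sum_sq_le_sq_sum_of_nonneg fun i _ => Real.sqrt_nonneg _

theorem Real.one_le_log_of_three_le {x : ℝ} (hx : 3 ≤ x) : 1 ≤ Real.log x := by
  rw [Real.le_log_iff_exp_le (by linarith)]
  exact Real.exp_one_lt_three.le.trans hx

theorem one_div_card_mul_sum_le {ι : Type*} [Fintype ι] [Nonempty ι] {f : ι → ℝ} {a : ℝ}
    (h : ∀ i, f i ≤ a) : 1 / (Fintype.card ι : ℝ) * ∑ i, f i ≤ a := by
  rw [one_div_mul_eq_div, div_le_iff₀ (by exact_mod_cast Fintype.card_pos), mul_comm]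
  simpa using sum_le_card_nsmul univ f a fun i _ => h i

theorem frobNorm_le_l1Norm {m k : ℕ} (A : Matrix (Fin m) (Fin k) ℝ) :
    frobNorm A ≤ l1Norm A :=
  calc frobNorm A ≤ ∑ i, √(∑ j, A i j ^ 2) :=
        Real.sqrt_sum_le_sum_sqrt _ fun i _ => by positivity
    _ ≤ ∑ i, ∑ j, √(A i j ^ 2) :=
        sum_le_sum fun i _ => Real.sqrt_sum_le_sum_sqrt _ fun j _ => sq_nonneg _
    _ = l1Norm A := by simp only [Real.sqrt_sq_eq_abs, l1Norm]

section Frobenius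

attribute [local instance] Matrix.frobeniusNormedAddCommGroup

theorem frobNorm_eq_norm {m k : ℕ} (A : Matrix (Fin m) (Fin k) ℝ) : frobNorm A = ‖A‖ := by
  simp [frobNorm, Matrix.frobenius_norm_def, Real.sqrt_eq_rpow]

theorem frobNorm_le_add_frobNorm_sub {m k : ℕ} (A B : Matrix (Fin m) (Fin k) ℝ) :
    frobNorm B ≤ frobNorm A + frobNorm (A - B) := by
  simpa [frobNorm_eq_norm] using norm_le_norm_add_norm_sub A B

theorem frobNorm_mul_le {m d k : ℕ} (X : Matrix (Fin m) (Fin d) ℝ)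
    (Z : Matrix (Fin d) (Fin k) ℝ) :
    frobNorm (X * Z) ≤ frobNorm X * frobNorm Z := by
  simpa only [frobNorm_eq_norm] using Matrix.frobenius_norm_mul X Z

end Frobenius

theorem frobNorm_eq_sqrt_sum_eigenvalues {m k : ℕ} (A : Matrix (Fin m) (Fin k) ℝ) :
    frobNorm A = √(∑ i, (posSemidef_conjTranspose_mul_self A).1.eigenvalues i) := by
  have h := (posSemidef_conjTranspose_mul_self A).1.trace_eq_sum_eigenvalues
  simp only [RCLike.ofReal_real_eq_id, id] at h
  rw [← h, frobNorm, sum_comm]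
  simp [Matrix.trace, Matrix.mul_apply, sq]

theorem nuclearNorm_eq_sum_sqrt_eigenvalues {m k : ℕ} (A : Matrix (Fin m) (Fin k) ℝ) :
    nuclearNorm A = ∑ i, √((posSemidef_conjTranspose_mul_self A).1.eigenvalues i) := by
  rw [nuclearNorm, Matrix.trace_mul_cycle, Unitary.coe_star_mul_self, Matrix.one_mul]
  simp [Matrix.trace]

theorem frobNorm_le_nuclearNorm {m k : ℕ} (A : Matrix (Fin m) (Fin k) ℝ) :
    frobNorm A ≤ nuclearNorm A := by
  rw [frobNorm_eq_sqrt_sum_eigenvalues, nuclearNorm_eq_sum_sqrt_eigenvalues]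
  exact Real.sqrt_sum_le_sum_sqrt _ fun i _ =>
    (posSemidef_conjTranspose_mul_self A).eigenvalues_nonneg i

theorem frobNorm_le_of_l1Norm_sub_le {m k : ℕ} (hk : 0 < k) {A B : Matrix (Fin m) (Fin k) ℝ}
    {e : ℝ} (h : l1Norm (A - B) ≤ e) : frobNorm B ≤ frobNorm A + √k * e := by
  have he : 0 ≤ e := (sum_nonneg fun i _ => sum_nonneg fun j _ => abs_nonneg _).trans h
  have hk1 : 1 ≤ √k := Real.one_le_sqrt.mpr (by exact_mod_cast hk)
  calc frobNorm B ≤ frobNorm A + frobNorm (A - B) := frobNorm_le_add_frobNorm_sub A B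
    _ ≤ frobNorm A + e := by grw [frobNorm_le_l1Norm (A - B), h]
    _ ≤ frobNorm A + √k * e := by gcongr; exact le_mul_of_one_le_left he hk1

theorem sgn_sq (b : Bool) : sgn b ^ 2 = 1 := by cases b <;> norm_num [sgn]

theorem sgn_le_one (b : Bool) : sgn b ≤ 1 := by cases b <;> norm_num [sgn]

theorem sum_sgn_mul_le_sqrt_mul_l21Norm {m k : ℕ} (σ : Fin m × Fin k → Bool)
    (E : Matrix (Fin m) (Fin k) ℝ) :
    ∑ i, ∑ j, sgn (σ (i, j)) * E i j ≤ √k * l21Norm E := by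
  rw [l21Norm, mul_sum]
  refine sum_le_sum fun i _ => ?_
  simpa [sgn_sq] using Real.sum_mul_le_sqrt_mul_sqrt univ (fun j => sgn (σ (i, j))) (E i)

def IsOneHotRows {m k : ℕ} (M : Matrix (Fin m) (Fin k) ℝ) : Prop :=
  ∀ i, ∃ j, ∀ l, M i l = if l = j then 1 else 0

theorem IsOneHotRows.exists_sum_mul_apply_eq {m k : ℕ} {M : Matrix (Fin m) (Fin k) ℝ}
    (hM : IsOneHotRows M) (i : Fin m) (f : Fin k → ℝ) : ∃ j, ∑ l, f l * M i l = f j := by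
  obtain ⟨j, hj⟩ := hM i
  exact ⟨j, by simp [hj]⟩

theorem IsOneHotRows.frobNorm_eq {m k : ℕ} {M : Matrix (Fin m) (Fin k) ℝ}
    (hM : IsOneHotRows M) : frobNorm M = √m := by
  have hrow : ∀ i, ∑ l, M i l ^ 2 = 1 := fun i => by
    obtain ⟨j, hj⟩ := hM i
    simp [hj]
  simp [frobNorm, hrow]

theorem IsOneHotRows.sqrt_le_frobNorm_mul {m d k : ℕ} {X : Matrix (Fin m) (Fin d) ℝ}
    {Z : Matrix (Fin d) (Fin k) ℝ} (h : IsOneHotRows (X * Z)) :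
    √m ≤ frobNorm X * frobNorm Z :=
  h.frobNorm_eq ▸ frobNorm_mul_le X Z

theorem IsOneHotRows.sum_sgn_mul_le {m k : ℕ} (σ : Fin m × Fin k → Bool)
    {M : Matrix (Fin m) (Fin k) ℝ} (hM : IsOneHotRows M) :
    ∑ i, ∑ j, sgn (σ (i, j)) * M i j ≤ m := by
  calc ∑ i, ∑ j, sgn (σ (i, j)) * M i j ≤ ∑ _i : Fin m, (1 : ℝ) := sum_le_sum fun i _ => by
        obtain ⟨j, hj⟩ := hM.exists_sum_mul_apply_eq i fun j => sgn (σ (i, j))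
        exact hj ▸ sgn_le_one _
    _ = m := by simp

theorem IsOneHotRows.sum_sgn_mul_add_le {m k : ℕ} (σ : Fin m × Fin k → Bool)
    {M E : Matrix (Fin m) (Fin k) ℝ} (hM : IsOneHotRows M) :
    ∑ i, ∑ j, sgn (σ (i, j)) * (M i j + E i j) ≤ m + √k * l21Norm E := by
  simp only [mul_add, sum_add_distrib]
  exact add_le_add (hM.sum_sgn_mul_le σ) (sum_sgn_mul_le_sqrt_mul_l21Norm σ E)

theorem one_div_le_min_of_sqrt_le {n c a b L : ℝ} (hn : 0 < n) (hc : 1 ≤ c) (hL : 1 ≤ L)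
    (ha : √n ≤ a) (hb : √n ≤ b) :
    1 / c ≤ min (a * √(L / (n * c))) (min (b / √(n * c)) √(2 / c)) := by
  have hc0 : 0 < c := by linarith
  have h1c : 1 / c ≤ √(1 / c) := by
    rw [Real.le_sqrt (by positivity) (by positivity), div_pow, one_pow, one_div_le_one_div
      (by positivity) hc0]
    nlinarith
  have hn_div : √n / √(n * c) = √(1 / c) := by
    rw [← Real.sqrt_div hn.le]
    field_simp
  refine le_min ?_ (le_min ?_ ?_) <;> refine h1c.trans ?_
  · calc √(1 / c) ≤ √n * √(L / (n * c)) := by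
          rw [← Real.sqrt_mul hn.le]
          gcongr
          field_simp
          exact hL
      _ ≤ a * √(L / (n * c)) := by gcongr
  · rw [← hn_div]
    gcongr
  · gcongr
    norm_num

theorem sqrt_div_mul_le_sqrt_three_mul_log {n c : ℝ} (hn : 1 ≤ n) (hc : 3 ≤ c) :
    √c / (n * c) ≤ √(3 * Real.log c / (n * c)) := by
  have hc0 : 0 < c := by linarith
  have hlog := Real.one_le_log_of_three_le hc
  rw [Real.le_sqrt (by positivity) (by positivity), div_pow, Real.sq_sqrt hc0.le,
    div_le_div_iff₀ (by positivity) (by positivity)]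
  calc c * (n * c) ≤ 1 * (n * c) ^ 2 := by
        rw [one_mul, sq]
        gcongr
        exact le_mul_of_one_le_left hc0.le hn
    _ ≤ 3 * Real.log c * (n * c) ^ 2 := by gcongr; linarith

/-- the empirical Rademacher complexity of the class
    {(i,j) ↦ (XZ + E_l)_{ij} : ‖X‖_* ≤ 𝒳_*, ‖Z‖_* ≤ 𝒵_*, ‖E_l‖_{2,1} ≤ ℰ_{l,21},
     ‖X̃ − X‖₁ ≤ ℰ_{f,1}, rows of XZ one-hot} is bounded by
    ℰ_{l,21}·√(3 ln c/(nc)) + min{𝒳_*𝒵_*·√(ln(2 max(n,c))/(nc)),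
      𝒵_*(‖X̃‖_F + √d·ℰ_{f,1})/√(nc), √(2/c)}. -/
theorem rademacher_FLR_bound (n d c : ℕ) (hn : 0 < n) (hd : 0 < d) (hc : 3 ≤ c)
    (Xt : Matrix (Fin n) (Fin d) ℝ) (Xs Zs El21 Ef1 : ℝ)
    (hXs : 0 ≤ Xs) (hZs : 0 ≤ Zs) (hEl21 : 0 ≤ El21) (hEf1 : 0 ≤ Ef1) :
    ((1 : ℝ) / 2 ^ (n * c)) * ∑ σ : Fin n × Fin c → Bool,
        sSup {v : ℝ | ∃ (X : Matrix (Fin n) (Fin d) ℝ) (Z : Matrix (Fin d) (Fin c) ℝ)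
          (El : Matrix (Fin n) (Fin c) ℝ),
            nuclearNorm X ≤ Xs ∧ nuclearNorm Z ≤ Zs ∧ l21Norm El ≤ El21 ∧
            l1Norm (Xt - X) ≤ Ef1 ∧
            (∀ i, ∃ j, ∀ k, (X * Z) i k = if k = j then (1 : ℝ) else 0) ∧
            v = ((1 : ℝ) / (n * c)) * ∑ i : Fin n, ∑ j : Fin c,
              sgn (σ (i, j)) * ((X * Z) i j + El i j)} ≤
      El21 * Real.sqrt (3 * Real.log c / (n * c)) +
        min (Xs * Zs * Real.sqrt (Real.log (2 * ((max n c : ℕ) : ℝ)) / (n * c)))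
          (min (Zs * (frobNorm Xt + Real.sqrt d * Ef1) / Real.sqrt (n * c))
            (Real.sqrt (2 / c))) := by
  have hnR : (1 : ℝ) ≤ n := by exact_mod_cast hn
  have hcR : (3 : ℝ) ≤ c := by exact_mod_cast hc
  have hXt : 0 ≤ frobNorm Xt := Real.sqrt_nonneg _
  have hcard : (2 : ℝ) ^ (n * c) = Fintype.card (Fin n × Fin c → Bool) := by simp
  rw [hcard]
  refine one_div_card_mul_sum_le fun σ => Real.sSup_le ?_ (by positivity)
  rintro _ ⟨X, Z, El, hX, hZ, hEl, hXtX, hXZ : IsOneHotRows (X * Z), rfl⟩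
  have hXZs : √n ≤ Xs * Zs := hXZ.sqrt_le_frobNorm_mul.trans <| mul_le_mul
    ((frobNorm_le_nuclearNorm X).trans hX) ((frobNorm_le_nuclearNorm Z).trans hZ)
    (Real.sqrt_nonneg _) hXs
  have hZXt : √n ≤ Zs * (frobNorm Xt + √d * Ef1) := hXZ.sqrt_le_frobNorm_mul.trans <| by
    rw [mul_comm Zs]
    exact mul_le_mul (frobNorm_le_of_l1Norm_sub_le hd hXtX)
      ((frobNorm_le_nuclearNorm Z).trans hZ) (Real.sqrt_nonneg _) (by positivity)
  have hlog : 1 ≤ Real.log (2 * ((max n c : ℕ) : ℝ)) := Real.one_le_log_of_three_le <| by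
    have : (c : ℝ) ≤ (max n c : ℕ) := by exact_mod_cast le_max_right n c
    linarith
  calc 1 / (n * c) * ∑ i, ∑ j, sgn (σ (i, j)) * ((X * Z) i j + El i j)
      ≤ 1 / (n * c) * (n + √c * El21) := by
        gcongr
        exact (hXZ.sum_sgn_mul_add_le σ).trans (by gcongr)
    _ = El21 * (√c / (n * c)) + 1 / c := by field_simp; ring
    _ ≤ _ := by
        gcongr
        · exact sqrt_div_mul_le_sqrt_three_mul_log hnR hcR
        · exact one_div_le_min_of_sqrt_le (by linarith) (by linarith) hlog hXZs hZXt
end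

section
/- Let J ∈ ℝ^{d×c}, B ∈ ℝ^{n×c}, X ∈ ℝ^{n×d}, M₄ ∈ ℝ^{n×c}, M₅ ∈ ℝ^{n×d}, and μ > 0. Then the matrix JJᵀ + I_d is invertible, and K* = ((M₄Jᵀ + M₅)/μ + BJᵀ + X)(JJᵀ + I_d)^{-1} is the unique global minimizer over K ∈ ℝ^{n×d} of the function K ↦ tr(M₄ᵀ(B − KJ)) + tr(M₅ᵀ(X − K)) + (μ/2)(‖B − KJ‖_F² + ‖X − K‖_F²). -/
open Matrix

/-- Squared Frobenius norm of a real matrix. -/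
noncomputable def frobSq {m k : ℕ} (A : Matrix (Fin m) (Fin k) ℝ) : ℝ :=
  ∑ i, ∑ j, (A i j) ^ 2

/-- The objective of the K-subproblem:
    K ↦ tr(M₄ᵀ(B − KJ)) + tr(M₅ᵀ(X − K)) + (μ/2)(‖B − KJ‖_F² + ‖X − K‖_F²). -/
noncomputable def objK {n d c : ℕ} (J : Matrix (Fin d) (Fin c) ℝ)
    (B : Matrix (Fin n) (Fin c) ℝ) (X : Matrix (Fin n) (Fin d) ℝ)
    (M4 : Matrix (Fin n) (Fin c) ℝ) (M5 : Matrix (Fin n) (Fin d) ℝ) (μ : ℝ)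
    (K : Matrix (Fin n) (Fin d) ℝ) : ℝ :=
  Matrix.trace (M4ᵀ * (B - K * J)) + Matrix.trace (M5ᵀ * (X - K)) +
    (μ / 2) * (frobSq (B - K * J) + frobSq (X - K))

/-- The closed-form solution K* = ((M₄Jᵀ + M₅)/μ + BJᵀ + X)(JJᵀ + I)⁻¹. -/
noncomputable def Kstar {n d c : ℕ} (J : Matrix (Fin d) (Fin c) ℝ)
    (B : Matrix (Fin n) (Fin c) ℝ) (X : Matrix (Fin n) (Fin d) ℝ)
    (M4 : Matrix (Fin n) (Fin c) ℝ) (M5 : Matrix (Fin n) (Fin d) ℝ) (μ : ℝ) :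
    Matrix (Fin n) (Fin d) ℝ :=
  (μ⁻¹ • (M4 * Jᵀ + M5) + B * Jᵀ + X) * (J * Jᵀ + 1)⁻¹

lemma frobSq_eq_trace {m k : ℕ} (A : Matrix (Fin m) (Fin k) ℝ) :
    frobSq A = Matrix.trace (Aᵀ * A) := by
  rw [frobSq, Matrix.trace]
  rw [Finset.sum_comm]
  simp [Matrix.diag, Matrix.mul_apply, sq]

lemma frobSq_nonneg {m k : ℕ} (A : Matrix (Fin m) (Fin k) ℝ) : 0 ≤ frobSq A := by
  apply Finset.sum_nonneg; intro i _
  apply Finset.sum_nonneg; intro j _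
  positivity

lemma frobSq_eq_zero {m k : ℕ} {A : Matrix (Fin m) (Fin k) ℝ} (h : frobSq A = 0) :
    A = 0 := by
  ext i j
  have h1 := (Finset.sum_eq_zero_iff_of_nonneg (fun i _ => Finset.sum_nonneg
    (fun j _ => sq_nonneg (A i j)))).mp h i (Finset.mem_univ i)
  have h2 := (Finset.sum_eq_zero_iff_of_nonneg (fun j _ => sq_nonneg (A i j))).mp h1 j
    (Finset.mem_univ j)
  simpa using pow_eq_zero_iff (n := 2) (by norm_num) |>.mp h2

lemma trace_transpose_mul_symm {m k : ℕ} (A C : Matrix (Fin m) (Fin k) ℝ) :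
    Matrix.trace (Aᵀ * C) = Matrix.trace (Cᵀ * A) := by
  rw [← Matrix.trace_transpose (Aᵀ * C), Matrix.transpose_mul, Matrix.transpose_transpose]

lemma frobSq_sub {m k : ℕ} (A C : Matrix (Fin m) (Fin k) ℝ) :
    frobSq (A - C) = frobSq A - 2 * Matrix.trace (Aᵀ * C) + frobSq C := by
  simp only [frobSq_eq_trace, Matrix.transpose_sub, Matrix.sub_mul, Matrix.mul_sub,
    Matrix.trace_sub]
  rw [trace_transpose_mul_symm C A]
  ring

/-- JJᵀ + I is invertible and K* is the unique global minimizer of the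
    K-subproblem. -/
theorem Kstar_unique_minimizer (n d c : ℕ) (J : Matrix (Fin d) (Fin c) ℝ)
    (B : Matrix (Fin n) (Fin c) ℝ) (X : Matrix (Fin n) (Fin d) ℝ)
    (M4 : Matrix (Fin n) (Fin c) ℝ) (M5 : Matrix (Fin n) (Fin d) ℝ) (μ : ℝ) (hμ : 0 < μ) :
    IsUnit (J * Jᵀ + 1) ∧
    (∀ K : Matrix (Fin n) (Fin d) ℝ, objK J B X M4 M5 μ (Kstar J B X M4 M5 μ) ≤ objK J B X M4 M5 μ K) ∧
    (∀ K : Matrix (Fin n) (Fin d) ℝ,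
      objK J B X M4 M5 μ K = objK J B X M4 M5 μ (Kstar J B X M4 M5 μ) → K = Kstar J B X M4 M5 μ) := by
  have hJJ : (J * Jᵀ).PosSemidef := by
    have := Matrix.posSemidef_self_mul_conjTranspose J
    rwa [Matrix.conjTranspose_eq_transpose_of_trivial] at this
  have hS : (J * Jᵀ + 1).PosDef := Matrix.PosDef.posSemidef_add hJJ Matrix.PosDef.one
  have hUnit : IsUnit (J * Jᵀ + 1) := hS.isUnit
  have hUdet : IsUnit (J * Jᵀ + 1).det := (Matrix.isUnit_iff_isUnit_det _).mp hUnit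
  set K0 := Kstar J B X M4 M5 μ with hK0def
  -- normal equation
  have hK0 : K0 * (J * Jᵀ + 1) = μ⁻¹ • (M4 * Jᵀ + M5) + B * Jᵀ + X := by
    rw [hK0def, Kstar, Matrix.mul_assoc, Matrix.nonsing_inv_mul _ hUdet, Matrix.mul_one]
  have h2 : μ • (K0 * (J * Jᵀ) + K0) = (M4 * Jᵀ + M5) + μ • (B * Jᵀ + X) := by
    have : K0 * (J * Jᵀ) + K0 = K0 * (J * Jᵀ + 1) := by rw [Matrix.mul_add, Matrix.mul_one]
    rw [this, hK0, smul_add, smul_add, smul_smul, mul_inv_cancel₀ hμ.ne', one_smul,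
      smul_add]
    abel
  have hG : M4 * Jᵀ + M5 + μ • ((B - K0 * J) * Jᵀ + (X - K0)) = 0 := by
    have h3 : μ • ((B - K0 * J) * Jᵀ + (X - K0))
        = μ • (B * Jᵀ + X) - μ • (K0 * (J * Jᵀ) + K0) := by
      rw [Matrix.sub_mul, Matrix.mul_assoc]
      rw [← smul_sub]
      congr 1
      abel
    rw [h3, h2]
    abel
  have cyc : ∀ (A : Matrix (Fin n) (Fin c) ℝ) (E : Matrix (Fin n) (Fin d) ℝ),
      Matrix.trace ((A * Jᵀ)ᵀ * E) = Matrix.trace (Aᵀ * (E * J)) := by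
    intro A E
    rw [Matrix.transpose_mul, Matrix.transpose_transpose]
    rw [Matrix.trace_mul_comm (J * Aᵀ) E, ← Matrix.mul_assoc, Matrix.trace_mul_comm (E * J) Aᵀ]
  have hzero : ∀ E : Matrix (Fin n) (Fin d) ℝ,
      Matrix.trace (M4ᵀ * (E * J)) + Matrix.trace (M5ᵀ * E)
        + μ * (Matrix.trace ((B - K0 * J)ᵀ * (E * J)) + Matrix.trace ((X - K0)ᵀ * E)) = 0 := by
    intro E
    have := congrArg (fun M => Matrix.trace (Mᵀ * E)) hG
    simp only [Matrix.transpose_add, Matrix.transpose_smul, Matrix.add_mul,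
      Matrix.smul_mul, Matrix.trace_add, Matrix.trace_smul, Matrix.transpose_zero,
      Matrix.zero_mul, Matrix.trace_zero, smul_eq_mul] at this
    rw [cyc M4 E, cyc (B - K0 * J) E] at this
    linarith [this]
  have hobj : ∀ K : Matrix (Fin n) (Fin d) ℝ,
      objK J B X M4 M5 μ K = objK J B X M4 M5 μ K0
        + (μ / 2) * (frobSq ((K - K0) * J) + frobSq (K - K0)) := by
    intro K
    set E := K - K0 with hE
    set P := B - K0 * J with hP
    set Q := X - K0 with hQ
    have hBK : B - K * J = P - E * J := by
      rw [hP, hE, Matrix.sub_mul]; abel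
    have hXK : X - K = Q - E := by rw [hQ, hE]; abel
    rw [objK, objK, hBK, hXK, frobSq_sub P (E * J), frobSq_sub Q E,
      Matrix.mul_sub M4ᵀ P (E * J), Matrix.mul_sub M5ᵀ Q E,
      Matrix.trace_sub, Matrix.trace_sub]
    have h := hzero E
    rw [← hP, ← hQ]
    linear_combination -h
  refine ⟨hUnit, fun K => ?_, fun K hK => ?_⟩
  · rw [hobj K]
    have h1 := frobSq_nonneg ((K - K0) * J)
    have h2 := frobSq_nonneg (K - K0)
    nlinarith
  · rw [hobj K] at hK
    have h1 := frobSq_nonneg ((K - K0) * J)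
    have h2 := frobSq_nonneg (K - K0)
    have h3 : frobSq (K - K0) = 0 := by nlinarith
    have := frobSq_eq_zero h3
    rw [sub_eq_zero] at this
    exact this
end
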